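/- arXiv:2501.03175 — 2 statements merged into one kernel-verified Lean document; each statement's English description precedes it below -/
import Mathlib

section
/- Let f: {0,1}^n → {0,1}^n (n ∈ ℕ, n ≠ 2) be a Hamiltonian cycle Boolean network that is self-dual in I ⊆ [n]. Then every coordinate j ∈ I has in-degree n in the interaction graph, i.e., f_j depends on all n variables. -/
def flipBit {n : ℕ} (x : Fin n → Bool) (i : Fin n) : Fin n → Bool :=
  Function.update x i (!(x i))

def negOn {n : ℕ} (I : Finset (Fin n)) (x : Fin n → Bool) : Fin n → Bool :=
  fun k => if k ∈ I then !(x k) else x k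

/-!
The map `f` is a single cycle of length `2 ^ n` and commutes with the involution `negOn I`, so
`negOn I` acts on the cycle as the shift by half its length. Counting modulo 2, the points `x` of
the second half with `x j = false`, `f x j = true` correspond to the points of the first half with
`x j = true`, `f x j = false`; together they count the changes of the bit `j` along the path from
any `x₀` to `negOn I x₀`, an odd number because `j ∈ I`. If `f_j` did not depend on `x i`, this
count would be even when `i ≠ j` (flip `x i`), and equal to `2 ^ (n - 2)` when `i = j`, which is
odd only for `n = 2`.
-/

open Finset Function

section Cycle

variable {α : Type*}

theorem Function.minimalPeriod_eq_of_isLeast {f : α → α} {x : α} {N : ℕ}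
    (h : IsLeast {k | 0 < k ∧ f^[k] x = x} N) : minimalPeriod f x = N :=
  le_antisymm (IsPeriodicPt.minimalPeriod_le h.1.1 h.1.2)
    (h.2 ⟨IsPeriodicPt.minimalPeriod_pos h.1.1 h.1.2, iterate_minimalPeriod⟩)

theorem Function.bijective_of_forall_mem_periodicPts {f : α → α} (h : ∀ x, x ∈ periodicPts f) :
    Bijective f :=
  Set.bijOn_univ.mp (Set.eq_univ_of_forall h ▸ bijOn_periodicPts f)

theorem Function.bijective_iterate_of_minimalPeriod_eq_card [Fintype α] {f : α → α} {x : α}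
    (hx : minimalPeriod f x = Fintype.card α) :
    Bijective fun t : Fin (minimalPeriod f x) => f^[t] x := by
  refine (Fintype.bijective_iff_injective_and_card _).mpr ⟨fun s t hst => ?_, by simp [hx]⟩
  exact Fin.ext (iterate_injOn_Iio_minimalPeriod s.2 t.2 hst)

theorem Function.two_mul_eq_minimalPeriod_of_commute {f σ : α → α} (hσ : Involutive σ)
    (hc : Function.Commute f σ) {x : α} {m : ℕ} (hm : σ x = f^[m] x) (hne : σ x ≠ x)
    (hlt : m < minimalPeriod f x) : 2 * m = minimalPeriod f x := by
  have hperiodic : IsPeriodicPt f (2 * m) x := by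
    rw [IsPeriodicPt, IsFixedPt, two_mul, iterate_add_apply, ← hm, (hc.iterate_left m).eq, ← hm,
      hσ x]
  have hm0 : m ≠ 0 := by rintro rfl; exact hne hm
  exact Nat.eq_of_dvd_of_lt_two_mul (by omega) (isPeriodicPt_iff_minimalPeriod_dvd.mp hperiodic)
    (by omega)

end Cycle

section RisingEdges

variable {α : Type*} [Fintype α]

/-- For `p = (· j)` this is the set `T(f_j, x_j = 0)` of the paper. -/
def risingEdges (f : α → α) (p : α → Bool) : Finset α :=
  univ.filter fun x => p x = false ∧ p (f x) = true

/-- Since `σ (f^[t] x) = f^[m + t] x`, the rising edges on the second half of the cycle are the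
images under `σ` of the falling edges on the first half; so the sum telescopes along the path from
`x` to `σ x`, whose endpoints have different `p`. -/
theorem natCast_card_risingEdges_eq_one {f σ : α → α} {p : α → Bool} (hc : Function.Commute f σ)
    (hp : ∀ y, p (σ y) = !p y) {x : α} {m : ℕ} (horbit : Bijective fun t : Fin (2 * m) => f^[t] x)
    (hm : σ x = f^[m] x) : (#(risingEdges f p) : ZMod 2) = 1 := by
  let rising : α → ZMod 2 := fun y => if p y = false ∧ p (f y) = true then 1 else 0
  let level : α → ZMod 2 := fun y => (p y).toNat
  have hpair : ∀ y, rising y + rising (σ y) = level (f y) - level y := by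
    intro y
    simp only [rising, level, hc y, hp]
    cases p y <;> cases p (f y) <;> decide
  calc (#(risingEdges f p) : ZMod 2)
      = ∑ y, rising y := by rw [risingEdges, card_filter]; push_cast; rfl
    _ = ∑ t ∈ range m, (rising (f^[t] x) + rising (σ (f^[t] x))) := by
      rw [← horbit.sum_comp, Fin.sum_univ_eq_sum_range (fun t => rising (f^[t] x)), two_mul,
        sum_range_add, sum_add_distrib]
      congr 1
      refine sum_congr rfl fun t _ => ?_
      rw [← (hc.iterate_left t).eq, hm, ← iterate_add_apply, add_comm]
    _ = ∑ t ∈ range m, (level (f^[t + 1] x) - level (f^[t] x)) := by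
      simp only [hpair, iterate_succ_apply']
    _ = 1 := by
      rw [sum_range_sub (fun t => level (f^[t] x)), ← hm, iterate_zero_apply]
      simp only [level, hp]
      cases p x <;> decide

theorem odd_card_risingEdges {f σ : α → α} {p : α → Bool} {x : α}
    (hx : minimalPeriod f x = Fintype.card α) (hσ : Involutive σ) (hc : Function.Commute f σ)
    (hp : ∀ y, p (σ y) = !p y) : Odd #(risingEdges f p) := by
  have horbit := bijective_iterate_of_minimalPeriod_eq_card hx
  obtain ⟨⟨m, hm_lt⟩, hm⟩ := horbit.2 (σ x)
  have hne : σ x ≠ x := fun h => by simpa [h] using hp x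
  rw [← two_mul_eq_minimalPeriod_of_commute hσ hc hm.symm hne hm_lt] at horbit
  exact ZMod.natCast_eq_one_iff_odd.mp (natCast_card_risingEdges_eq_one hc hp horbit hm.symm)

end RisingEdges

section BooleanCube

variable {n : ℕ}

theorem flipBit_apply_self (x : Fin n → Bool) (i : Fin n) : flipBit x i i = !x i := by
  simp [flipBit]

theorem flipBit_apply_of_ne (x : Fin n → Bool) {i k : Fin n} (h : k ≠ i) : flipBit x i k = x k :=
  update_of_ne h _ _

theorem flipBit_flipBit (x : Fin n → Bool) (i : Fin n) : flipBit (flipBit x i) i = x := by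
  simp [flipBit]

theorem negOn_involutive (I : Finset (Fin n)) : Involutive (negOn I) := by
  intro x; funext k; by_cases h : k ∈ I <;> simp [negOn, h]

theorem negOn_apply_of_mem {I : Finset (Fin n)} (x : Fin n → Bool) {k : Fin n} (h : k ∈ I) :
    negOn I x k = !x k := by
  simp [negOn, h]

theorem card_eq_two_mul_card_filter_of_flipBit_mem {s : Finset (Fin n → Bool)} {i : Fin n}
    (hs : ∀ x ∈ s, flipBit x i ∈ s) (b : Bool) : #s = 2 * #(s.filter fun x => x i = b) := by
  rw [← card_filter_add_card_filter_not (p := fun x => x i = b), two_mul]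
  congr 1
  symm
  refine card_nbij' (flipBit · i) (flipBit · i) ?_ ?_ ?_ ?_ <;> intro x hx <;> cases b <;>
    simp_all [flipBit_apply_self, flipBit_flipBit]

theorem card_filter_comp_of_bijective {α : Type*} [Fintype α] {f : α → α} (hf : Bijective f)
    (p : α → Prop) [DecidablePred p] : #(univ.filter fun x => p (f x)) = #(univ.filter p) := by
  simp only [card_filter]
  exact hf.sum_comp fun y => if p y then 1 else 0

theorem even_card_risingEdges_of_flipBit {f : (Fin n → Bool) → (Fin n → Bool)} {i j : Fin n}
    (hij : i ≠ j) (h : ∀ x, f (flipBit x i) j = f x j) : Even #(risingEdges f (· j)) := by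
  refine ⟨_, (card_eq_two_mul_card_filter_of_flipBit_mem (i := i) (fun x hx => ?_) false).trans
    (two_mul _)⟩
  simpa [risingEdges, flipBit_apply_of_ne x hij.symm, h] using hx

/-- As `f` is bijective, `f_j` is `true` on half of the cube, and since `f_j` ignores `x j` the
bit `x j` splits that half evenly. -/
theorem four_mul_card_risingEdges_of_flipBit {f : (Fin n → Bool) → (Fin n → Bool)}
    (hf : Bijective f) {j : Fin n} (h : ∀ x, f (flipBit x j) j = f x j) :
    4 * #(risingEdges f (· j)) = 2 ^ n := by
  have hvalue : #(univ.filter fun x => f x j = true) = 2 * #(risingEdges f (· j)) := by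
    have hrising : ((univ.filter fun x => f x j = true).filter fun x => x j = false) =
        risingEdges f (· j) := by
      ext x; simp [risingEdges, and_comm]
    rw [← hrising]
    exact card_eq_two_mul_card_filter_of_flipBit_mem (fun x hx => by simpa [h] using hx) false
  have hcube := card_eq_two_mul_card_filter_of_flipBit_mem (fun x _ => mem_univ (flipBit x j)) true
  rw [card_univ, Fintype.card_pi, prod_const, Fintype.card_bool, card_univ, Fintype.card_fin,
    ← card_filter_comp_of_bijective hf] at hcube
  omega

end BooleanCube

theorem eq_two_of_four_mul_odd_eq_two_pow {k n : ℕ} (hk : Odd k) (h : 4 * k = 2 ^ n) : n = 2 := by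
  obtain ⟨a, -, rfl⟩ := (Nat.dvd_prime_pow Nat.prime_two).mp (Dvd.intro_left 4 h)
  obtain rfl : a = 0 := by by_contra ha; simp [← Nat.not_even_iff_odd, Nat.even_pow, ha] at hk
  exact Nat.pow_right_injective le_rfl (by simpa using h.symm)

/-- In a Hamiltonian cycle Boolean network that is self-dual in `I` (n ≠ 2),
every coordinate of `I` depends on all `n` variables. -/
theorem stmt9 {n : ℕ} (hn : n ≠ 2) (f : (Fin n → Bool) → (Fin n → Bool))
    (hham : ∀ x : Fin n → Bool, IsLeast {k : ℕ | 0 < k ∧ f^[k] x = x} (2 ^ n))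
    (I : Finset (Fin n))
    (hsd : ∀ x : Fin n → Bool, f (negOn I x) = negOn I (f x)) :
    ∀ j ∈ I, ∀ i : Fin n, ∃ x : Fin n → Bool, f x j ≠ f (flipBit x i) j := by
  intro j hj i
  by_contra! hindep
  have hcycle : minimalPeriod f (fun _ => false) = Fintype.card (Fin n → Bool) := by
    simp [minimalPeriod_eq_of_isLeast (hham _)]
  have hodd : Odd #(risingEdges f (· j)) :=
    odd_card_risingEdges hcycle (negOn_involutive I) hsd fun y => negOn_apply_of_mem y hj
  rcases eq_or_ne i j with rfl | hij
  · have hf : Bijective f :=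
      bijective_of_forall_mem_periodicPts fun x => mk_mem_periodicPts (hham x).1.1 (hham x).1.2
    exact hn (eq_two_of_four_mul_odd_eq_two_pow hodd
      (four_mul_card_risingEdges_of_flipBit hf fun x => (hindep x).symm))
  · exact Nat.not_even_iff_odd.mpr hodd
      (even_card_risingEdges_of_flipBit hij fun x => (hindep x).symm)
end

section
/- Let f: {0,1}^n → {0,1}^n be a monotone Boolean network (each f_j is nondecreasing with respect to the componentwise partial order on {0,1}^n). Then for n ≥ 1, f is not a Hamiltonian cycle; in fact every limit cycle of f has length at most the binomial coefficient C(n, ⌊n/2⌋), which is strictly less than 2^n. -/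
/-!
Comparability of two points of a periodic orbit of a monotone map is preserved by the map: if
`y ≤ f^[d] y` then `y ≤ f^[d] y ≤ f^[2d] y ≤ ⋯`, and periodicity closes this chain back at `y`,
forcing `f^[d] y = y`. Hence a periodic orbit of a monotone self-map of `{0,1}^n` is an antichain,
and Sperner's theorem bounds its length by `C(n, ⌊n/2⌋)`, which is less than `2^n`.
-/

open Function Finset

namespace Function

variable {α : Type*} {f : α → α} {x : α} {n : ℕ}

theorem minimalPeriod_eq_of_isLeast_s12 (h : IsLeast {k | 0 < k ∧ f^[k] x = x} n) :
    minimalPeriod f x = n :=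
  le_antisymm (IsPeriodicPt.minimalPeriod_le h.1.1 h.1.2)
    (h.2 ⟨minimalPeriod_pos_of_mem_periodicPts ⟨n, h.1⟩, isPeriodicPt_minimalPeriod f x⟩)

end Function

namespace Monotone

variable {α : Type*} [PartialOrder α] {f : α → α} {x : α} {n : ℕ}

theorem isFixedPt_of_le_map_of_isPeriodicPt (hf : Monotone f) (hn : 0 < n)
    (hx : IsPeriodicPt f n x) (h : x ≤ f x) : IsFixedPt f x := by
  refine le_antisymm ?_ h
  simpa only [iterate_one, hx.eq] using hf.monotone_iterate_of_le_map h (Nat.one_le_of_lt hn)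

theorem iterate_eq_of_le_iterate_of_isPeriodicPt (hf : Monotone f) (hn : 0 < n)
    (hx : IsPeriodicPt f n x) {d : ℕ} (h : x ≤ f^[d] x) : f^[d] x = x :=
  (hf.iterate d).isFixedPt_of_le_map_of_isPeriodicPt hn (hx.iterate d) h

theorem isAntichain_range_iterate (hf : Monotone f) (hx : x ∈ periodicPts f) :
    IsAntichain (· ≤ ·) (Set.range fun k => f^[k] x) := by
  obtain ⟨n, hn, hxn⟩ := hx
  rintro _ ⟨k, rfl⟩ _ ⟨m, rfl⟩ hne hle
  dsimp only at hne hle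
  obtain ⟨n, rfl⟩ : ∃ n', n = n' + 1 := ⟨n - 1, by omega⟩
  -- `k + n * k` steps make `k` full turns of the cycle
  have hreach : f^[m + n * k] (f^[k] x) = f^[m] x := by
    rw [← iterate_add_apply, add_assoc, ← Nat.succ_mul, iterate_add_apply, (hxn.mul_const k).eq]
  rw [← hreach] at hle hne
  exact hne (hf.iterate_eq_of_le_iterate_of_isPeriodicPt hn (hxn.apply_iterate k) hle).symm

end Monotone

def OrderEmbedding.boolFunToFinset (ι : Type*) [Fintype ι] : (ι → Bool) ↪o Finset ι :=
  OrderEmbedding.ofMapLEIff (fun x => univ.filter (x · = true)) fun x y => by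
    simp [Pi.le_def, Bool.le_iff_imp, subset_iff]

theorem IsAntichain.card_le_choose_of_boolFun {ι : Type*} [Fintype ι] {s : Finset (ι → Bool)}
    (hs : IsAntichain (· ≤ ·) (s : Set (ι → Bool))) :
    #s ≤ (Fintype.card ι).choose (Fintype.card ι / 2) := by
  classical
  let e := OrderEmbedding.boolFunToFinset ι
  rw [← card_map e.toEmbedding]
  apply IsAntichain.sperner
  simpa using hs.image_embedding e

theorem Monotone.minimalPeriod_le_choose {ι : Type*} [Fintype ι] {f : (ι → Bool) → ι → Bool}
    (hf : Monotone f) (x : ι → Bool) :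
    minimalPeriod f x ≤ (Fintype.card ι).choose (Fintype.card ι / 2) := by
  by_cases hx : x ∈ periodicPts f
  · classical
    rw [← card_range (minimalPeriod f x), ← card_image_of_injOn (f := (f^[·] x))]
    · refine IsAntichain.card_le_choose_of_boolFun
        ((hf.isAntichain_range_iterate hx).subset ?_)
      simp only [coe_image, Set.image_subset_iff]
      exact fun k _ => ⟨k, rfl⟩
    · simpa only [coe_range] using iterate_injOn_Iio_minimalPeriod
  · simp [minimalPeriod_eq_zero_of_notMem_periodicPts hx]

/-- A monotone Boolean network is never a Hamiltonian cycle; moreover every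
limit cycle has length at most `C(n, ⌊n/2⌋) < 2^n`. -/
theorem stmt12 {n : ℕ} (hn : 1 ≤ n) (f : (Fin n → Bool) → (Fin n → Bool))
    (hmono : ∀ x y : Fin n → Bool, x ≤ y → f x ≤ f y) :
    (¬ ∀ x : Fin n → Bool, IsLeast {k : ℕ | 0 < k ∧ f^[k] x = x} (2 ^ n)) ∧
    (∀ L : ℕ, 2 ≤ L →
      (∃ x : Fin n → Bool, IsLeast {k : ℕ | 0 < k ∧ f^[k] x = x} L) →
      L ≤ n.choose (n / 2)) ∧
    n.choose (n / 2) < 2 ^ n := by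
  have hf : Monotone f := fun x y => hmono x y
  have hcycle (L : ℕ) : (∃ x, IsLeast {k | 0 < k ∧ f^[k] x = x} L) → L ≤ n.choose (n / 2) := by
    rintro ⟨x, hx⟩
    simpa only [minimalPeriod_eq_of_isLeast_s12 hx, Fintype.card_fin] using
      hf.minimalPeriod_le_choose x
  have hlt : n.choose (n / 2) < 2 ^ n := Nat.choose_lt_two_pow n _ hn
  exact ⟨fun h => (hcycle _ ⟨fun _ => false, h _⟩).not_gt hlt, fun L _ => hcycle L, hlt⟩
end
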